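/- Let a ∈ (0,∞], I = [0,a), let F₁ and F₂ be admissible on I, and let Ω be a convex domain in ℝⁿ (n ≥ 1). Then C_Ω[F₁] = C_Ω[F₂] if and only if there exists a pair (A,B) ∈ (0,∞) × ℝ such that F₁(r) = A·F₂(r) + B for all r ∈ (0,a). -/

import Mathlib

open Set Filter
open scoped ENNReal Topology

noncomputable section

/-- The interval `I = [0,a)` for `a ∈ (0,∞]`, as a subset of `ℝ`. -/
def intervalI (a : ℝ≥0∞) : Set ℝ := {r : ℝ | 0 ≤ r ∧ ENNReal.ofReal r < a}

/-- The interior `(0,a)` of `I = [0,a)`. -/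
def intervalI₀ (a : ℝ≥0∞) : Set ℝ := {r : ℝ | 0 < r ∧ ENNReal.ofReal r < a}

/-- `F : I → [-∞,∞)` is admissible on `I = [0,a)`: continuous on `(0,a)`,
strictly increasing on `I`, `F(0) = -∞`, and never `+∞` on `I`. -/
structure IsAdmissible (a : ℝ≥0∞) (F : ℝ → EReal) : Prop where
  continuousOn : ContinuousOn F (intervalI₀ a)
  strictMonoOn : StrictMonoOn F (intervalI a)
  map_zero : F 0 = ⊥
  lt_top : ∀ r ∈ intervalI a, F r < ⊤

/-- `f` is `F`-concave on `Ω`: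
`F(f((1-λ)x+λy)) ≥ (1-λ)F(f(x)) + λF(f(y))` for `x,y ∈ Ω`, `λ ∈ (0,1)`. -/
def FConcaveOn {E : Type*} [AddCommGroup E] [Module ℝ E]
    (F : ℝ → EReal) (Ω : Set E) (f : E → ℝ) : Prop :=
  ∀ x ∈ Ω, ∀ y ∈ Ω, ∀ lam : ℝ, lam ∈ Ioo (0:ℝ) 1 →
    ((1 - lam : ℝ) : EReal) * F (f x) + (lam : EReal) * F (f y)
      ≤ F (f ((1 - lam) • x + lam • y))

/-- `C_Ω[F]`: the set of `F`-concave functions on `Ω` with values in `I = [0,a)`. -/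
def CSet {E : Type*} [AddCommGroup E] [Module ℝ E]
    (a : ℝ≥0∞) (F : ℝ → EReal) (Ω : Set E) : Set (E → ℝ) :=
  {f | MapsTo f Ω (intervalI a) ∧ FConcaveOn F Ω f}

/-!
If `C_Ω[F₂] ⊆ C_Ω[F₁]`, testing the inclusion on `f_{F₂} ∘ min(L, M)` with `L` affine and
non-constant on `Ω` shows that the transition map `F₁ ∘ f_{F₂}` is concave on `J_{F₂}`. If the
classes are equal, the inverse `F₂ ∘ f_{F₁}` is concave as well; an increasing function with a
concave inverse is convex, so the transition map is affine, with positive slope. Conversely, a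
positive affine change of `F` is monotone and commutes with convex combinations in `[-∞,∞)`, so it
preserves `F`-concavity.
-/

theorem ConcaveOn.convexOn_of_leftInvOn {𝕜 E β : Type*} [Semiring 𝕜] [PartialOrder 𝕜]
    [AddCommMonoid E] [PartialOrder E] [SMul 𝕜 E] [AddCommMonoid β] [PartialOrder β] [SMul 𝕜 β]
    {S : Set E} {T : Set β} {g : E → β} {h : β → E} (hh : ConcaveOn 𝕜 T h)
    (hS : Convex 𝕜 S) (hg : MonotoneOn g S) (hgST : MapsTo g S T) (hhTS : MapsTo h T S)
    (hhg : LeftInvOn h g S) (hgh : LeftInvOn g h T) : ConvexOn 𝕜 S g := by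
  refine ⟨hS, fun x hx y hy α β hα hβ hαβ => ?_⟩
  have hc : α • g x + β • g y ∈ T := hh.1 (hgST hx) (hgST hy) hα hβ hαβ
  have hle : α • x + β • y ≤ h (α • g x + β • g y) := by
    simpa only [hhg hx, hhg hy] using hh.2 (hgST hx) (hgST hy) hα hβ hαβ
  calc g (α • x + β • y) ≤ g (h (α • g x + β • g y)) := hg (hS hx hy hα hβ hαβ) (hhTS hc) hle
    _ = α • g x + β • g y := hgh hc

theorem ConvexOn.eq_slope_mul_add_of_concaveOn {𝕜 : Type*} [Field 𝕜] [LinearOrder 𝕜]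
    [IsStrictOrderedRing 𝕜] {s : Set 𝕜} {g : 𝕜 → 𝕜}
    (hconv : ConvexOn 𝕜 s g) (hconc : ConcaveOn 𝕜 s g) {x₀ x₁ x : 𝕜} (hx₀ : x₀ ∈ s)
    (hx₁ : x₁ ∈ s) (hne : x₁ ≠ x₀) (hx : x ∈ s) : g x = slope g x₀ x₁ * (x - x₀) + g x₀ := by
  rcases eq_or_ne x x₀ with rfl | hxx₀
  · simp
  have hslope : slope g x₀ x = slope g x₀ x₁ := by
    have hx' : x ∈ s \ {x₀} := ⟨hx, hxx₀⟩
    have hx₁' : x₁ ∈ s \ {x₀} := ⟨hx₁, hne⟩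
    rcases le_total x x₁ with h | h
    · exact le_antisymm (hconv.slope_mono hx₀ hx' hx₁' h) (hconc.slope_anti hx₀ hx' hx₁' h)
    · exact le_antisymm (hconc.slope_anti hx₀ hx₁' hx' h) (hconv.slope_mono hx₀ hx₁' hx' h)
  rw [← hslope, mul_comm]
  simpa using (sub_smul_slope_vadd g x₀ x).symm

lemma EReal.coe_mul_add_coe_mul_eq_bot {μ ν : ℝ} (hμ : 0 < μ) (hν : 0 < ν) {x y : EReal}
    (h : x = ⊥ ∨ y = ⊥) : (μ : EReal) * x + ν * y = ⊥ := by
  rcases h with rfl | rfl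
  · rw [EReal.coe_mul_bot_of_pos hμ, EReal.bot_add]
  · rw [EReal.coe_mul_bot_of_pos hν, EReal.add_bot]

lemma EReal.convexCombination_mul_add {A B μ : ℝ} (hA : 0 < A) (hμ : μ ∈ Ioo (0 : ℝ) 1)
    {x y : EReal} (hx : x ≠ ⊤) (hy : y ≠ ⊤) :
    ((1 - μ : ℝ) : EReal) * (A * x + B) + (μ : EReal) * (A * y + B)
      = A * (((1 - μ : ℝ) : EReal) * x + μ * y) + B := by
  have h1μ : (0 : ℝ) < 1 - μ := by linarith [hμ.2]
  induction x using EReal.rec with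
  | bot => simp only [EReal.coe_mul_bot_of_pos hA, EReal.coe_mul_bot_of_pos h1μ, EReal.bot_add]
  | top => exact absurd rfl hx
  | coe x =>
    induction y using EReal.rec with
    | bot =>
      simp only [EReal.coe_mul_bot_of_pos hA, EReal.coe_mul_bot_of_pos hμ.1, EReal.bot_add,
        EReal.add_bot]
    | top => exact absurd rfl hy
    | coe y => norm_cast; ring

variable {a : ℝ≥0∞}

lemma intervalI₀_subset_intervalI : intervalI₀ a ⊆ intervalI a := fun _ hr => ⟨hr.1.le, hr.2⟩

lemma zero_mem_intervalI (ha : 0 < a) : (0 : ℝ) ∈ intervalI a := ⟨le_rfl, by simpa using ha⟩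

lemma ordConnected_intervalI₀ : (intervalI₀ a).OrdConnected :=
  ⟨fun _ hx _ hy _ ht => ⟨hx.1.trans_le ht.1, (ENNReal.ofReal_le_ofReal ht.2).trans_lt hy.2⟩⟩

lemma exists_lt_mem_intervalI₀ (ha : 0 < a) :
    ∃ x ∈ intervalI₀ a, ∃ y ∈ intervalI₀ a, x < y := by
  obtain ⟨r, -, hr₀, hra⟩ := ENNReal.lt_iff_exists_real_btwn.1 ha
  have hr : 0 < r := ENNReal.ofReal_pos.1 hr₀
  exact ⟨r / 2, ⟨by positivity, (ENNReal.ofReal_le_ofReal (by linarith)).trans_lt hra⟩,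
    r, ⟨hr, hra⟩, by linarith⟩

/-- `F` as a real function; meaningful only on `(0,a)`, where `F` is finite. -/
def realF (F : ℝ → EReal) (r : ℝ) : ℝ := (F r).toReal

/-- The range `J_F = F((0,a))`. -/
def rangeJ (a : ℝ≥0∞) (F : ℝ → EReal) : Set ℝ := realF F '' intervalI₀ a

open Classical in
/-- The inverse `f_F : J_F → (0,a)`, extended by `0` outside `J_F`, so that `F ∘ invF a F` is
`-∞` there. -/
def invF (a : ℝ≥0∞) (F : ℝ → EReal) (t : ℝ) : ℝ :=
  if t ∈ rangeJ a F then Function.invFunOn (realF F) (intervalI₀ a) t else 0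

variable {F : ℝ → EReal}

lemma invF_mem {t : ℝ} (ht : t ∈ rangeJ a F) : invF a F t ∈ intervalI₀ a := by
  rw [invF, if_pos ht]
  exact Function.invFunOn_mem ht

lemma realF_invF {t : ℝ} (ht : t ∈ rangeJ a F) : realF F (invF a F t) = t := by
  rw [invF, if_pos ht]
  exact Function.invFunOn_eq ht

lemma mapsTo_invF : MapsTo (invF a F) (rangeJ a F) (intervalI₀ a) := fun _ => invF_mem

namespace IsAdmissible

variable (hF : IsAdmissible a F)
include hF

lemma ne_bot {r : ℝ} (hr : r ∈ intervalI₀ a) : F r ≠ ⊥ := by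
  have h0 := hF.strictMonoOn (zero_mem_intervalI (lt_of_le_of_lt zero_le hr.2))
    (intervalI₀_subset_intervalI hr) hr.1
  rw [hF.map_zero] at h0
  exact h0.ne'

lemma coe_realF {r : ℝ} (hr : r ∈ intervalI₀ a) : (realF F r : EReal) = F r :=
  EReal.coe_toReal (hF.lt_top r (intervalI₀_subset_intervalI hr)).ne (hF.ne_bot hr)

lemma strictMonoOn_realF : StrictMonoOn (realF F) (intervalI₀ a) := fun x hx y hy hxy => by
  have h := hF.strictMonoOn (intervalI₀_subset_intervalI hx) (intervalI₀_subset_intervalI hy) hxy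
  rwa [← hF.coe_realF hx, ← hF.coe_realF hy, EReal.coe_lt_coe_iff] at h

lemma continuousOn_realF : ContinuousOn (realF F) (intervalI₀ a) :=
  EReal.continuousOn_toReal.comp hF.continuousOn fun r hr => by
    simp [hF.ne_bot hr, (hF.lt_top r (intervalI₀_subset_intervalI hr)).ne]

lemma convex_rangeJ : Convex ℝ (rangeJ a F) :=
  (ordConnected_intervalI₀.isPreconnected.image _ hF.continuousOn_realF).ordConnected.convex

lemma invF_realF {r : ℝ} (hr : r ∈ intervalI₀ a) : invF a F (realF F r) = r :=
  hF.strictMonoOn_realF.injOn (invF_mem (mem_image_of_mem _ hr)) hr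
    (realF_invF (mem_image_of_mem _ hr))

lemma F_invF {t : ℝ} (ht : t ∈ rangeJ a F) : F (invF a F t) = t := by
  rw [← hF.coe_realF (invF_mem ht), realF_invF ht]

lemma F_invF_of_notMem {t : ℝ} (ht : t ∉ rangeJ a F) : F (invF a F t) = ⊥ := by
  rw [invF, if_neg ht, hF.map_zero]

lemma strictMonoOn_invF : StrictMonoOn (invF a F) (rangeJ a F) := fun s hs t ht hst => by
  rw [← hF.strictMonoOn_realF.lt_iff_lt (invF_mem hs) (invF_mem ht), realF_invF hs,
    realF_invF ht]
  exact hst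

end IsAdmissible

variable {E : Type*} [AddCommGroup E] [Module ℝ E]

theorem IsAdmissible.invF_comp_mem_CSet (hF : IsAdmissible a F) (Ω : Set E) {ℓ : E → ℝ}
    (hℓ : ConcaveOn ℝ univ ℓ) {M : ℝ} (hM : M ∈ rangeJ a F) (hℓM : ∀ z, ℓ z ≤ M) :
    invF a F ∘ ℓ ∈ CSet a F Ω := by
  have ha : 0 < a := lt_of_le_of_lt zero_le (invF_mem hM).2
  refine ⟨fun z _ => ?_, fun u _ v _ μ hμ => ?_⟩
  · by_cases hz : ℓ z ∈ rangeJ a F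
    · exact intervalI₀_subset_intervalI (invF_mem hz)
    · simpa [invF, hz] using zero_mem_intervalI ha
  have h1μ : (0 : ℝ) < 1 - μ := by linarith [hμ.2]
  by_cases hu : ℓ u ∈ rangeJ a F
  · by_cases hv : ℓ v ∈ rangeJ a F
    · have hcomb : (1 - μ) * ℓ u + μ * ℓ v ≤ ℓ ((1 - μ) • u + μ • v) :=
        hℓ.2 (mem_univ u) (mem_univ v) h1μ.le hμ.1.le (by ring)
      have hw : ℓ ((1 - μ) • u + μ • v) ∈ rangeJ a F := by
        refine hF.convex_rangeJ.ordConnected.out (min_rec' _ hu hv) hM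
          ⟨le_trans ?_ hcomb, hℓM _⟩
        nlinarith [min_le_left (ℓ u) (ℓ v), min_le_right (ℓ u) (ℓ v), hμ.1]
      simp only [Function.comp_apply, hF.F_invF hu, hF.F_invF hv, hF.F_invF hw]
      exact_mod_cast hcomb
    · exact (EReal.coe_mul_add_coe_mul_eq_bot h1μ hμ.1 (.inr (hF.F_invF_of_notMem hv))).le.trans
        bot_le
  · exact (EReal.coe_mul_add_coe_mul_eq_bot h1μ hμ.1 (.inl (hF.F_invF_of_notMem hu))).le.trans
      bot_le

def transition (a : ℝ≥0∞) (F₁ F₂ : ℝ → EReal) : ℝ → ℝ := realF F₁ ∘ invF a F₂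

variable {F₁ F₂ : ℝ → EReal}

theorem concaveOn_transition_of_CSet_subset {Ω : Set E} (hΩ : Ω.Nontrivial)
    (hF₁ : IsAdmissible a F₁) (hF₂ : IsAdmissible a F₂) (hsub : CSet a F₂ Ω ⊆ CSet a F₁ Ω) :
    ConcaveOn ℝ (rangeJ a F₂) (transition a F₁ F₂) := by
  obtain ⟨p, hp, q, hq, hpq⟩ := hΩ
  obtain ⟨ψ, hψ⟩ := Module.Projective.exists_dual_eq_one ℝ (sub_ne_zero.2 hpq.symm)
  refine concaveOn_iff_forall_pos.2 ⟨hF₂.convex_rangeJ, fun s hs t ht α β hα hβ hαβ => ?_⟩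
  obtain rfl : α = 1 - β := by linarith
  let L : E → ℝ := fun z => s + (t - s) * ψ (z - p)
  have hLconc : ConcaveOn ℝ univ L := by
    have hL : L = ⇑((t - s) • ψ) + fun _ => s - (t - s) * ψ p := by
      ext z
      simp only [L, map_sub, Pi.add_apply, LinearMap.smul_apply, smul_eq_mul]
      ring
    exact hL ▸ (((t - s) • ψ).concaveOn convex_univ).add_const _
  let ℓ : E → ℝ := L ⊓ fun _ => max s t
  have hℓ : ∀ μ ∈ Icc (0 : ℝ) 1, ℓ ((1 - μ) • p + μ • q) = (1 - μ) * s + μ * t := by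
    intro μ hμ
    have hL : L ((1 - μ) • p + μ • q) = (1 - μ) * s + μ * t := by
      have hsub : (1 - μ) • p + μ • q - p = μ • (q - p) := by module
      simp only [L, hsub, map_smul, hψ, smul_eq_mul]
      ring
    simp only [ℓ, Pi.inf_apply, hL, inf_eq_left]
    nlinarith [le_max_left s t, le_max_right s t, hμ.1, hμ.2]
  have hf : invF a F₂ ∘ ℓ ∈ CSet a F₁ Ω := hsub <| hF₂.invF_comp_mem_CSet Ω
    (hLconc.inf (concaveOn_const _ convex_univ)) (max_rec' _ hs ht) fun _ => inf_le_right
  have key := hf.2 p hp q hq β ⟨hβ, by linarith⟩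
  have hwJ : (1 - β) * s + β * t ∈ rangeJ a F₂ :=
    hF₂.convex_rangeJ hs ht (by linarith) hβ.le (by ring)
  simp only [Function.comp_apply] at key
  rw [(by simpa using hℓ 0 (by simp) : ℓ p = s), (by simpa using hℓ 1 (by simp) : ℓ q = t),
    hℓ β ⟨hβ.le, by linarith⟩, ← hF₁.coe_realF (invF_mem hs), ← hF₁.coe_realF (invF_mem ht),
    ← hF₁.coe_realF (invF_mem hwJ)] at key
  simp only [transition, Function.comp_apply, smul_eq_mul]
  exact_mod_cast key

lemma mapsTo_transition : MapsTo (transition a F₁ F₂) (rangeJ a F₂) (rangeJ a F₁) :=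
  fun _ ht => mem_image_of_mem _ (invF_mem ht)

lemma strictMonoOn_transition (hF₁ : IsAdmissible a F₁) (hF₂ : IsAdmissible a F₂) :
    StrictMonoOn (transition a F₁ F₂) (rangeJ a F₂) :=
  hF₁.strictMonoOn_realF.comp hF₂.strictMonoOn_invF mapsTo_invF

lemma IsAdmissible.leftInvOn_transition (hF₁ : IsAdmissible a F₁) :
    LeftInvOn (transition a F₂ F₁) (transition a F₁ F₂) (rangeJ a F₂) := fun t ht => by
  simp only [transition, Function.comp_apply, hF₁.invF_realF (invF_mem ht), realF_invF ht]

lemma IsAdmissible.transition_realF (hF₂ : IsAdmissible a F₂) {r : ℝ} (hr : r ∈ intervalI₀ a) :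
    transition a F₁ F₂ (realF F₂ r) = realF F₁ r :=
  congrArg (realF F₁) (hF₂.invF_realF hr)

theorem exists_eq_mul_add_of_CSet_eq {Ω : Set E} (hΩ : Ω.Nontrivial) (ha : 0 < a)
    (hF₁ : IsAdmissible a F₁) (hF₂ : IsAdmissible a F₂) (heq : CSet a F₁ Ω = CSet a F₂ Ω) :
    ∃ A B : ℝ, 0 < A ∧ ∀ r ∈ intervalI₀ a, F₁ r = (A : EReal) * F₂ r + (B : EReal) := by
  have hconc : ConcaveOn ℝ (rangeJ a F₂) (transition a F₁ F₂) :=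
    concaveOn_transition_of_CSet_subset hΩ hF₁ hF₂ heq.ge
  have hconv : ConvexOn ℝ (rangeJ a F₂) (transition a F₁ F₂) :=
    (concaveOn_transition_of_CSet_subset hΩ hF₂ hF₁ heq.le).convexOn_of_leftInvOn
      hF₂.convex_rangeJ (strictMonoOn_transition hF₁ hF₂).monotoneOn mapsTo_transition
      mapsTo_transition hF₁.leftInvOn_transition hF₂.leftInvOn_transition
  obtain ⟨x, hx, y, hy, hxy⟩ := exists_lt_mem_intervalI₀ ha
  have hx₀ : realF F₂ x ∈ rangeJ a F₂ := mem_image_of_mem _ hx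
  have hx₁ : realF F₂ y ∈ rangeJ a F₂ := mem_image_of_mem _ hy
  have hlt : realF F₂ x < realF F₂ y := hF₂.strictMonoOn_realF hx hy hxy
  refine ⟨slope (transition a F₁ F₂) (realF F₂ x) (realF F₂ y), transition a F₁ F₂ (realF F₂ x) -
    slope (transition a F₁ F₂) (realF F₂ x) (realF F₂ y) * realF F₂ x, ?_, fun r hr => ?_⟩
  · rw [slope_def_field]
    exact div_pos (sub_pos.2 (strictMonoOn_transition hF₁ hF₂ hx₀ hx₁ hlt)) (sub_pos.2 hlt)
  · rw [← hF₁.coe_realF hr, ← hF₂.coe_realF hr, ← hF₂.transition_realF hr,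
      hconv.eq_slope_mul_add_of_concaveOn hconc hx₀ hx₁ hlt.ne' (mem_image_of_mem _ hr)]
    norm_cast
    ring

lemma eq_mul_add_on_intervalI (h₁ : F₁ 0 = ⊥) (h₂ : F₂ 0 = ⊥) {A B : ℝ} (hA : 0 < A)
    (h : ∀ r ∈ intervalI₀ a, F₁ r = (A : EReal) * F₂ r + (B : EReal)) :
    ∀ r ∈ intervalI a, F₁ r = (A : EReal) * F₂ r + (B : EReal) := by
  rintro r ⟨hr, hra⟩
  rcases hr.eq_or_lt with rfl | hr
  · rw [h₁, h₂, EReal.coe_mul_bot_of_pos hA, EReal.bot_add]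
  · exact h r ⟨hr, hra⟩

theorem CSet_subset_CSet_of_eq_mul_add {Ω : Set E} (hΩ : Convex ℝ Ω)
    (hF₂ : ∀ r ∈ intervalI a, F₂ r ≠ ⊤) {A B : ℝ} (hA : 0 < A)
    (h : ∀ r ∈ intervalI a, F₁ r = (A : EReal) * F₂ r + (B : EReal)) :
    CSet a F₂ Ω ⊆ CSet a F₁ Ω := by
  rintro f ⟨hmaps, hconc⟩
  refine ⟨hmaps, fun u hu v hv μ hμ => ?_⟩
  have hw : (1 - μ) • u + μ • v ∈ Ω := hΩ hu hv (by linarith [hμ.2]) hμ.1.le (by ring)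
  rw [h _ (hmaps hu), h _ (hmaps hv), h _ (hmaps hw),
    EReal.convexCombination_mul_add hA hμ (hF₂ _ (hmaps hu)) (hF₂ _ (hmaps hv))]
  gcongr
  exact hconc u hu v hv μ hμ

theorem CSet_eq_of_eq_mul_add {Ω : Set E} (hF₁ : IsAdmissible a F₁) (hF₂ : IsAdmissible a F₂)
    (hΩ : Convex ℝ Ω) {A B : ℝ} (hA : 0 < A)
    (h : ∀ r ∈ intervalI₀ a, F₁ r = (A : EReal) * F₂ r + (B : EReal)) :
    CSet a F₁ Ω = CSet a F₂ Ω := by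
  have hinv : ∀ r ∈ intervalI₀ a,
      F₂ r = ((A⁻¹ : ℝ) : EReal) * F₁ r + ((-(B / A) : ℝ) : EReal) := by
    intro r hr
    rw [h r hr, ← hF₂.coe_realF hr]
    norm_cast
    field_simp
    ring
  refine (CSet_subset_CSet_of_eq_mul_add hΩ (fun r hr => (hF₁.lt_top r hr).ne) (inv_pos.2 hA)
    (eq_mul_add_on_intervalI hF₂.map_zero hF₁.map_zero (inv_pos.2 hA) hinv)).antisymm ?_
  exact CSet_subset_CSet_of_eq_mul_add hΩ (fun r hr => (hF₂.lt_top r hr).ne) hA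
    (eq_mul_add_on_intervalI hF₁.map_zero hF₂.map_zero hA h)

/-- `C_Ω[F₁] = C_Ω[F₂]` iff `F₁ = A·F₂ + B` on `(0,a)` for some
`A ∈ (0,∞)` and `B ∈ ℝ`. -/
theorem stmt1 {n : ℕ} (hn : 1 ≤ n) (a : ℝ≥0∞) (ha : 0 < a)
    (F₁ F₂ : ℝ → EReal) (hF₁ : IsAdmissible a F₁) (hF₂ : IsAdmissible a F₂)
    (Ω : Set (EuclideanSpace ℝ (Fin n)))
    (hΩconv : Convex ℝ Ω) (hΩopen : IsOpen Ω) (hΩne : Ω.Nonempty) :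
    CSet a F₁ Ω = CSet a F₂ Ω ↔
      ∃ A B : ℝ, 0 < A ∧
        ∀ r ∈ intervalI₀ a, F₁ r = (A : EReal) * F₂ r + (B : EReal) := by
  have hΩ : Ω.Nontrivial := by
    have : Nonempty (Fin n) := ⟨⟨0, hn⟩⟩
    obtain ⟨p, hp⟩ := hΩne
    exact (infinite_of_mem_nhds p (hΩopen.mem_nhds hp)).nontrivial
  exact ⟨exists_eq_mul_add_of_CSet_eq hΩ ha hF₁ hF₂,
    fun ⟨A, B, hA, h⟩ => CSet_eq_of_eq_mul_add hF₁ hF₂ hΩconv hA h⟩
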